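/- Let E be a Hilbert space, M > 0, and Φ : 𝕋 → B(E) a measurable function such that for every integer n ≥ 1 one has ‖Φ(z)(1 − z^{2n})‖ ≤ M for almost every z ∈ 𝕋 (where 1 − z^{2n} acts as a scalar multiple of the identity). Then ‖Φ(z)‖ ≤ M/2 for almost every z ∈ 𝕋; in particular Φ ∈ L∞_{B(E)}(𝕋). -/

import Mathlib

/-!
For `z` outside the countable set of roots of unity, the powers of `z²` are dense in the circle,
so `z^{2n}` comes arbitrarily close to `-1` for large `n`, and `|1 - z^{2n}| ‖Φ(z)‖ ≤ M`
passes to the limit `2 ‖Φ(z)‖ ≤ M`. The roots of unity form a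
null set for the Haar measure, which has no atoms.
-/

open MeasureTheory Complex AddCircle
open scoped ENNReal Real

noncomputable section

namespace PaperTH

instance fact2pi : Fact (0 < 2 * Real.pi) := ⟨by positivity⟩

/-- The circle, as `ℝ / 2πℤ`. -/
abbrev 𝕋c := AddCircle (2 * Real.pi)

/-- The normalized Lebesgue (Haar) measure on the circle. -/
abbrev μc : Measure 𝕋c := haarAddCircle

end PaperTH

open Filter

namespace AddCircle

theorem countable_setOf_isOfFinAddOrder {T : ℝ} :
    {u : AddCircle T | IsOfFinAddOrder u}.Countable := by
  have : {u : AddCircle T | IsOfFinAddOrder u} = ⋃ n : ℕ, {u | (n + 1) • u = 0} := by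
    ext u
    simp only [Set.mem_ofPred_eq, Set.mem_iUnion, isOfFinAddOrder_iff_nsmul_eq_zero]
    exact ⟨fun ⟨n, hn, h⟩ => ⟨n - 1, by rwa [Nat.sub_add_cancel hn]⟩,
      fun ⟨n, h⟩ => ⟨n + 1, n.succ_pos, h⟩⟩
  rw [this]
  exact Set.countable_iUnion fun n => (finite_torsion T n.succ_pos).countable

variable {T : ℝ} [Fact (0 < T)]

instance : NullSingletonClass (haarAddCircle (T := T)) := by
  refine ⟨fun x => ?_⟩
  have h := volume_closedBall T (x := x) 0
  rw [volume_eq_smul_haarAddCircle] at h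
  simpa [(Fact.out : 0 < T).not_ge] using h

theorem mapClusterPt_atTop_nsmul {x : AddCircle T} (hx : ¬IsOfFinAddOrder x) (y : AddCircle T) :
    MapClusterPt y atTop (fun n : ℕ => n • x) := by
  rw [mapClusterPt_atTop_nsmul_iff_mem_topologicalClosure_zmultiples]
  exact (denseRange_zsmul_iff.2 (addOrderOf_eq_zero_iff.2 hx)) y

theorem toCircle_half_period : toCircle ((T / 2 : ℝ) : AddCircle T) = -1 := by
  rw [toCircle_apply_mk]
  have : 2 * Real.pi / T * (T / 2) = Real.pi := by field_simp [(Fact.out : 0 < T).ne']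
  rw [this]
  ext; simp [Circle.coe_exp]

theorem two_mul_le_of_forall_norm_one_sub_toCircle_nsmul_mul_le {x : AddCircle T}
    (hx : ¬IsOfFinAddOrder x) {c M : ℝ}
    (h : ∀ n : ℕ, 1 ≤ n → ‖1 - (toCircle (n • x) : ℂ)‖ * c ≤ M) : 2 * c ≤ M := by
  have hclosed : IsClosed {t : AddCircle T | ‖1 - (toCircle t : ℂ)‖ * c ≤ M} :=
    isClosed_le (by fun_prop) continuous_const
  have hhalf := hclosed.mem_of_mapClusterPt (mapClusterPt_atTop_nsmul hx (T / 2 : ℝ))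
    (eventually_atTop.2 ⟨1, h⟩)
  norm_num [toCircle_half_period] at hhalf
  exact hhalf

end AddCircle

namespace PaperTH

theorem ess_bound_of_bound_mul_one_sub_pow {E : Type*} [NormedAddCommGroup E]
    [InnerProductSpace ℂ E] (M : ℝ)
    (Φ : 𝕋c → (E →L[ℂ] E)) (hmeas : AEStronglyMeasurable Φ μc)
    (hbd : ∀ n : ℕ, 1 ≤ n → ∀ᵐ x ∂μc, ‖(1 - fourier (2 * (n : ℤ)) x) • Φ x‖ ≤ M) :
    (∀ᵐ x ∂μc, ‖Φ x‖ ≤ M / 2) ∧ MemLp Φ ∞ μc := by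
  have hbd_all : ∀ᵐ x ∂μc, ∀ n : ℕ, 1 ≤ n → ‖(1 - fourier (2 * (n : ℤ)) x) • Φ x‖ ≤ M :=
    ae_all_iff.2 fun n => eventually_imp_distrib_left.2 (hbd n)
  have hnorm : ∀ᵐ x ∂μc, ‖Φ x‖ ≤ M / 2 := by
    filter_upwards [hbd_all, countable_setOf_isOfFinAddOrder.ae_notMem μc] with x hx hfin
    have h2x : ¬IsOfFinAddOrder (2 • x) := fun h => hfin (h.of_nsmul two_ne_zero)
    have hfourier (n : ℕ) : fourier (2 * (n : ℤ)) x = toCircle (n • 2 • x) := by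
      rw [fourier_apply, mul_comm (2 : ℤ), mul_zsmul, natCast_zsmul, two_zsmul, two_nsmul]
    have := two_mul_le_of_forall_norm_one_sub_toCircle_nsmul_mul_le h2x (c := ‖Φ x‖)
      fun n hn => by simpa only [norm_smul, hfourier] using hx n hn
    linarith
  exact ⟨hnorm, memLp_top_of_bound hmeas _ hnorm⟩

end PaperTH
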